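/- There exist unital operator algebras X and Y inside M₂(ℂ) — namely X = span of the matrix unit E₁₂ and Y = span of E₂₂ — that are strongly TRO equivalent as operator spaces via M₁ = ℂ I₂ and M₂ = ℂ E₁₂, but are not strongly Δ-equivalent as operator algebras, since their diagonals X ∩ X* = 0 and Y ∩ Y* = Y are not Δ-equivalent. -/

import Mathlib

noncomputable section
open ContinuousLinearMap Filter Topology

/-- Closed linear span of a set. -/
def clSpan {E : Type*} [NormedAddCommGroup E] [NormedSpace ℂ E] (S : Set E) : Set E :=
  closure (Submodule.span ℂ S : Set E)

/-- Set of products of operators from two sets. -/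
def setMul {H₁ H₂ H₃ : Type*} [NormedAddCommGroup H₁] [NormedSpace ℂ H₁]
    [NormedAddCommGroup H₂] [NormedSpace ℂ H₂] [NormedAddCommGroup H₃] [NormedSpace ℂ H₃]
    (S : Set (H₂ →L[ℂ] H₃)) (T : Set (H₁ →L[ℂ] H₂)) : Set (H₁ →L[ℂ] H₃) :=
  {x | ∃ s ∈ S, ∃ t ∈ T, x = s.comp t}

/-- Set of adjoints. -/
def adjSet {H K : Type*} [NormedAddCommGroup H] [InnerProductSpace ℂ H] [CompleteSpace H]
    [NormedAddCommGroup K] [InnerProductSpace ℂ K] [CompleteSpace K]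
    (S : Set (H →L[ℂ] K)) : Set (K →L[ℂ] H) :=
  {x | ∃ s ∈ S, x = ContinuousLinearMap.adjoint s}

/-- A ternary ring of operators: a norm-closed subspace `M ⊆ B(H,K)` with `M M* M ⊆ M`. -/
structure IsTRO {H K : Type*} [NormedAddCommGroup H] [InnerProductSpace ℂ H] [CompleteSpace H]
    [NormedAddCommGroup K] [InnerProductSpace ℂ K] [CompleteSpace K]
    (M : Set (H →L[ℂ] K)) : Prop where
  isClosed : IsClosed M
  zero_mem : (0 : H →L[ℂ] K) ∈ M
  add_mem : ∀ x ∈ M, ∀ y ∈ M, x + y ∈ M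
  smul_mem : ∀ (c : ℂ), ∀ x ∈ M, c • x ∈ M
  ternary : ∀ x ∈ M, ∀ y ∈ M, ∀ z ∈ M,
    x.comp ((ContinuousLinearMap.adjoint y).comp z) ∈ M

/-- A (concrete) operator space: a norm-closed linear subspace of `B(H,K)`. -/
def IsOperatorSpace {H K : Type*} [NormedAddCommGroup H] [NormedSpace ℂ H]
    [NormedAddCommGroup K] [NormedSpace ℂ K] (X : Set (H →L[ℂ] K)) : Prop :=
  IsClosed X ∧ ∃ p : Submodule ℂ (H →L[ℂ] K), X = ↑p

/-- The operator `H₁^n → H₂^n` (with the ℓ²-norms) associated to an `n × n` matrix of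
operators. -/
def matOp {H₁ H₂ : Type*} [NormedAddCommGroup H₁] [InnerProductSpace ℂ H₁]
    [NormedAddCommGroup H₂] [InnerProductSpace ℂ H₂] {n : ℕ}
    (x : Matrix (Fin n) (Fin n) (H₁ →L[ℂ] H₂)) :
    (PiLp 2 fun _ : Fin n => H₁) →L[ℂ] (PiLp 2 fun _ : Fin n => H₂) :=
  (((PiLp.continuousLinearEquiv 2 ℂ fun _ : Fin n => H₂).symm :
      (∀ _ : Fin n, H₂) →L[ℂ] PiLp 2 fun _ : Fin n => H₂).comp
    (ContinuousLinearMap.pi fun i => ∑ j, (x i j).comp (ContinuousLinearMap.proj j))).comp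
    ((PiLp.continuousLinearEquiv 2 ℂ fun _ : Fin n => H₁ :
      (PiLp 2 fun _ : Fin n => H₁) →L[ℂ] ∀ _ : Fin n, H₁))

/-- A linear map between operator spaces is completely contractive on `X` if all its matrix
amplifications are contractive on matrices with entries from `X`. -/
def CompletelyContractiveOn {H₁ H₂ K₁ K₂ : Type*}
    [NormedAddCommGroup H₁] [InnerProductSpace ℂ H₁] [NormedAddCommGroup H₂]
    [InnerProductSpace ℂ H₂] [NormedAddCommGroup K₁] [InnerProductSpace ℂ K₁]
    [NormedAddCommGroup K₂] [InnerProductSpace ℂ K₂]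
    (f : (H₁ →L[ℂ] H₂) →ₗ[ℂ] (K₁ →L[ℂ] K₂)) (X : Set (H₁ →L[ℂ] H₂)) : Prop :=
  ∀ (n : ℕ) (x : Matrix (Fin n) (Fin n) (H₁ →L[ℂ] H₂)), (∀ i j, x i j ∈ X) →
    ‖matOp (Matrix.of fun i j => f (x i j))‖ ≤ ‖matOp x‖

/-- A linear map between operator spaces is completely isometric on `X` if all its matrix
amplifications are isometric on matrices with entries from `X`. -/
def CompletelyIsometricOn {H₁ H₂ K₁ K₂ : Type*}
    [NormedAddCommGroup H₁] [InnerProductSpace ℂ H₁] [NormedAddCommGroup H₂]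
    [InnerProductSpace ℂ H₂] [NormedAddCommGroup K₁] [InnerProductSpace ℂ K₁]
    [NormedAddCommGroup K₂] [InnerProductSpace ℂ K₂]
    (f : (H₁ →L[ℂ] H₂) →ₗ[ℂ] (K₁ →L[ℂ] K₂)) (X : Set (H₁ →L[ℂ] H₂)) : Prop :=
  ∀ (n : ℕ) (x : Matrix (Fin n) (Fin n) (H₁ →L[ℂ] H₂)), (∀ i j, x i j ∈ X) →
    ‖matOp (Matrix.of fun i j => f (x i j))‖ = ‖matOp x‖

/-- Strong TRO equivalence of concretely represented operator spaces:
`X = cl span(M₂ Y M₁*)` and `Y = cl span(M₂* X M₁)` for TROs `M₁`, `M₂`. -/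
def StronglyTROEquiv {K₁ K₂ H₁ H₂ : Type*}
    [NormedAddCommGroup K₁] [InnerProductSpace ℂ K₁] [CompleteSpace K₁]
    [NormedAddCommGroup K₂] [InnerProductSpace ℂ K₂] [CompleteSpace K₂]
    [NormedAddCommGroup H₁] [InnerProductSpace ℂ H₁] [CompleteSpace H₁]
    [NormedAddCommGroup H₂] [InnerProductSpace ℂ H₂] [CompleteSpace H₂]
    (X : Set (K₁ →L[ℂ] K₂)) (Y : Set (H₁ →L[ℂ] H₂)) : Prop :=
  ∃ (M₁ : Set (H₁ →L[ℂ] K₁)) (M₂ : Set (H₂ →L[ℂ] K₂)), IsTRO M₁ ∧ IsTRO M₂ ∧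
    X = clSpan (setMul (setMul M₂ Y) (adjSet M₁)) ∧
    Y = clSpan (setMul (setMul (adjSet M₂) X) M₁)

universe u

/-- A bundled complex Hilbert space. -/
structure HilbertC : Type (u + 1) where
  carrier : Type u
  [ng : NormedAddCommGroup carrier]
  [ip : InnerProductSpace ℂ carrier]
  [cs : CompleteSpace carrier]

attribute [instance] HilbertC.ng HilbertC.ip HilbertC.cs
instance : CoeSort HilbertC (Type u) := ⟨HilbertC.carrier⟩

/-- Strong Δ-equivalence of operator algebras: completely isometric homomorphisms `φ`, `ψ`
and a single TRO `M` with `φ(X) = cl span(M ψ(Y) M*)` and `ψ(Y) = cl span(M* φ(X) M)`. -/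
def StronglyDeltaEquivAlg {K L : Type u}
    [NormedAddCommGroup K] [InnerProductSpace ℂ K] [CompleteSpace K]
    [NormedAddCommGroup L] [InnerProductSpace ℂ L] [CompleteSpace L]
    (X : Set (K →L[ℂ] K)) (Y : Set (L →L[ℂ] L)) : Prop :=
  ∃ (G₁ G₂ : HilbertC.{u})
    (φ : (K →L[ℂ] K) →ₗ[ℂ] (G₁ →L[ℂ] G₁)) (ψ : (L →L[ℂ] L) →ₗ[ℂ] (G₂ →L[ℂ] G₂))
    (M : Set (G₂ →L[ℂ] G₁)),
    CompletelyIsometricOn φ X ∧ CompletelyIsometricOn ψ Y ∧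
    (∀ x ∈ X, ∀ x' ∈ X, φ (x.comp x') = (φ x).comp (φ x')) ∧
    (∀ y ∈ Y, ∀ y' ∈ Y, ψ (y.comp y') = (ψ y).comp (ψ y')) ∧
    IsTRO M ∧
    φ '' X = clSpan (setMul (setMul M (ψ '' Y)) (adjSet M)) ∧
    ψ '' Y = clSpan (setMul (setMul (adjSet M) (φ '' X)) M)

/-- The matrix unit `E₁₂` as an operator on `ℂ²`. -/
def egE12 : EuclideanSpace ℂ (Fin 2) →L[ℂ] EuclideanSpace ℂ (Fin 2) :=
  Matrix.toEuclideanCLM (𝕜 := ℂ) (Matrix.single 0 1 1)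

/-- The matrix unit `E₂₂` as an operator on `ℂ²`. -/
def egE22 : EuclideanSpace ℂ (Fin 2) →L[ℂ] EuclideanSpace ℂ (Fin 2) :=
  Matrix.toEuclideanCLM (𝕜 := ℂ) (Matrix.single 1 1 1)

/-- The operator algebra `X = ℂ E₁₂ ⊆ M₂(ℂ)`. -/
def egX : Set (EuclideanSpace ℂ (Fin 2) →L[ℂ] EuclideanSpace ℂ (Fin 2)) :=
  {T | ∃ c : ℂ, T = c • egE12}

/-- The operator algebra `Y = ℂ E₂₂ ⊆ M₂(ℂ)`. -/
def egY : Set (EuclideanSpace ℂ (Fin 2) →L[ℂ] EuclideanSpace ℂ (Fin 2)) :=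
  {T | ∃ c : ℂ, T = c • egE22}

/-- The TRO `M₁ = ℂ I₂`. -/
def egM1 : Set (EuclideanSpace ℂ (Fin 2) →L[ℂ] EuclideanSpace ℂ (Fin 2)) :=
  {T | ∃ c : ℂ, T = c • (1 : EuclideanSpace ℂ (Fin 2) →L[ℂ] EuclideanSpace ℂ (Fin 2))}

/-- The TRO `M₂ = ℂ E₁₂`. -/
def egM2 : Set (EuclideanSpace ℂ (Fin 2) →L[ℂ] EuclideanSpace ℂ (Fin 2)) :=
  {T | ∃ c : ℂ, T = c • egE12}

/-!
The TRO equivalence is a computation with matrix units: `E₁₂ E₂₂ I* = E₁₂` and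
`E₂₁ E₁₂ I = E₂₂`. Suppose `φ`, `ψ`, `M` implement a strong Δ-equivalence. Then `a = φ(E₁₂)` is
nonzero with `a² = 0`, while `ψ(E₂₂)` is a contractive idempotent, hence an orthogonal projection.
So `ψ(Y) = ℂ ψ(E₂₂)` is self-adjoint, hence so is `φ(X) = cl span(M ψ(Y) M*) = ℂ a`. Then
`a* = c a` and `‖a‖² = ‖a* a‖ = ‖c a²‖ = 0`, a contradiction.
-/

open scoped InnerProductSpace

section ScalarLine

variable {E : Type*} [AddCommGroup E] [Module ℂ E]

def scalarLine (v : E) : Set E := {x | ∃ c : ℂ, x = c • v}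

lemma self_mem_scalarLine (v : E) : v ∈ scalarLine v := ⟨1, (one_smul ℂ v).symm⟩

lemma zero_mem_scalarLine (v : E) : (0 : E) ∈ scalarLine v := ⟨0, (zero_smul ℂ v).symm⟩

lemma smul_mem_scalarLine {v x : E} (c : ℂ) (hx : x ∈ scalarLine v) : c • x ∈ scalarLine v := by
  obtain ⟨d, rfl⟩ := hx
  exact ⟨c * d, smul_smul c d v⟩

lemma scalarLine_subset {v w : E} (hw : w ∈ scalarLine v) : scalarLine w ⊆ scalarLine v := by
  rintro _ ⟨c, rfl⟩
  exact smul_mem_scalarLine c hw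

lemma scalarLine_eq_span (v : E) : scalarLine v = (ℂ ∙ v : Set E) := by
  ext x
  simp only [scalarLine, Set.mem_ofPred_eq, SetLike.mem_coe, Submodule.mem_span_singleton, eq_comm]

lemma image_scalarLine {F : Type*} [AddCommGroup F] [Module ℂ F] (f : E →ₗ[ℂ] F) (v : E) :
    f '' scalarLine v = scalarLine (f v) := by
  rw [scalarLine_eq_span, scalarLine_eq_span, ← Submodule.map_coe, Submodule.map_span,
    Set.image_singleton]

end ScalarLine

section NormedScalarLine

variable {E : Type*} [NormedAddCommGroup E] [NormedSpace ℂ E]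

lemma isClosed_scalarLine (v : E) : IsClosed (scalarLine v) := by
  rw [scalarLine_eq_span]
  exact Submodule.closed_of_finiteDimensional _

lemma clSpan_scalarLine (v : E) : clSpan (scalarLine v) = scalarLine v := by
  rw [clSpan, scalarLine_eq_span, Submodule.span_eq, ← scalarLine_eq_span]
  exact (isClosed_scalarLine v).closure_eq

variable {H K : Type*} [NormedAddCommGroup H] [NormedSpace ℂ H]
  [NormedAddCommGroup K] [NormedSpace ℂ K]

lemma comp_mem_scalarLine {u : K →L[ℂ] E} {v : H →L[ℂ] K} {x : K →L[ℂ] E} {y : H →L[ℂ] K}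
    (hx : x ∈ scalarLine u) (hy : y ∈ scalarLine v) : x.comp y ∈ scalarLine (u.comp v) := by
  obtain ⟨c, rfl⟩ := hx
  obtain ⟨d, rfl⟩ := hy
  exact ⟨c * d, by rw [smul_comp, comp_smul, smul_smul]⟩

lemma setMul_scalarLine (u : K →L[ℂ] E) (v : H →L[ℂ] K) :
    setMul (scalarLine u) (scalarLine v) = scalarLine (u.comp v) := by
  ext x
  constructor
  · rintro ⟨s, hs, t, ht, rfl⟩
    exact comp_mem_scalarLine hs ht
  · rintro ⟨c, rfl⟩
    exact ⟨c • u, ⟨c, rfl⟩, v, self_mem_scalarLine v, (smul_comp c u v).symm⟩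

lemma comp_mem_scalarLine_of_comp_self_mem {u : H →L[ℂ] H} (hu : u.comp u ∈ scalarLine u) :
    ∀ x ∈ scalarLine u, ∀ y ∈ scalarLine u, x.comp y ∈ scalarLine u :=
  fun _ hx _ hy => scalarLine_subset hu (comp_mem_scalarLine hx hy)

end NormedScalarLine

section Adjoint

variable {H K : Type*} [NormedAddCommGroup H] [InnerProductSpace ℂ H] [CompleteSpace H]
  [NormedAddCommGroup K] [InnerProductSpace ℂ K] [CompleteSpace K]

lemma adjSet_eq_image (S : Set (H →L[ℂ] K)) : adjSet S = adjoint '' S := by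
  ext x
  simp only [adjSet, Set.mem_ofPred_eq, Set.mem_image, eq_comm]

lemma adjSet_scalarLine (u : H →L[ℂ] K) : adjSet (scalarLine u) = scalarLine (adjoint u) := by
  ext x
  constructor
  · rintro ⟨_, ⟨c, rfl⟩, rfl⟩
    exact ⟨starRingEnd ℂ c, map_smulₛₗ _ _ _⟩
  · rintro ⟨c, rfl⟩
    exact ⟨starRingEnd ℂ c • u, ⟨_, rfl⟩, by rw [map_smulₛₗ, Complex.conj_conj]⟩

lemma isTRO_scalarLine {u : H →L[ℂ] K} (hu : u.comp ((adjoint u).comp u) ∈ scalarLine u) :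
    IsTRO (scalarLine u) where
  isClosed := isClosed_scalarLine u
  zero_mem := zero_mem_scalarLine u
  add_mem := by
    rintro _ ⟨c, rfl⟩ _ ⟨d, rfl⟩
    exact ⟨c + d, (add_smul c d u).symm⟩
  smul_mem c _ hx := smul_mem_scalarLine c hx
  ternary x hx y hy z hz := by
    have hy' : adjoint y ∈ scalarLine (adjoint u) := adjSet_scalarLine u ▸ ⟨y, hy, rfl⟩
    exact scalarLine_subset hu (comp_mem_scalarLine hx (comp_mem_scalarLine hy' hz))

lemma adjSet_setMul_subset {M : Set (H →L[ℂ] K)} {S : Set (H →L[ℂ] H)} (hS : adjSet S ⊆ S) :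
    adjSet (setMul (setMul M S) (adjSet M)) ⊆ setMul (setMul M S) (adjSet M) := by
  rintro _ ⟨_, ⟨_, ⟨m, hm, s, hs, rfl⟩, _, ⟨m', hm', rfl⟩, rfl⟩, rfl⟩
  refine ⟨m'.comp (adjoint s), ⟨m', hm', adjoint s, hS ⟨s, hs, rfl⟩, rfl⟩, adjoint m,
    ⟨m, hm, rfl⟩, ?_⟩
  simp only [adjoint_comp, adjoint_adjoint, comp_assoc]

lemma adjSet_clSpan_subset {S : Set (H →L[ℂ] H)} (hS : adjSet S ⊆ S) :
    adjSet (clSpan S) ⊆ clSpan S := by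
  have hspan : adjoint '' (Submodule.span ℂ S : Set (H →L[ℂ] H)) ⊆ Submodule.span ℂ S :=
    (Submodule.image_span_subset adjoint.toLinearEquiv.toLinearMap S _).mpr
      fun s hs => Submodule.subset_span (hS ⟨s, hs, rfl⟩)
  rw [adjSet_eq_image, clSpan]
  exact (image_closure_subset_closure_image adjoint.continuous).trans (closure_mono hspan)

lemma eq_zero_of_comp_self_eq_zero_of_adjoint_mem_scalarLine {a : H →L[ℂ] H} (haa : a.comp a = 0)
    (ha : adjoint a ∈ scalarLine a) : a = 0 := by
  obtain ⟨c, hc⟩ := ha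
  have h : ‖a‖ * ‖a‖ = 0 := by
    rw [← norm_adjoint_comp_self, hc, smul_comp, haa, smul_zero, norm_zero]
  exact norm_eq_zero.mp (mul_self_eq_zero.mp h)

end Adjoint

section Contraction

variable {𝕜 E : Type*} [RCLike 𝕜] [NormedAddCommGroup E] [InnerProductSpace 𝕜 E]

lemma inner_eq_zero_of_forall_norm_le_norm_add_smul {x y : E}
    (h : ∀ t : 𝕜, ‖x‖ ≤ ‖x + t • y‖) : ⟪x, y⟫_𝕜 = 0 := by
  set P := (𝕜 ∙ y).starProjection
  obtain ⟨t, ht⟩ := Submodule.mem_span_singleton.mp ((𝕜 ∙ y).starProjection_apply_mem x)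
  have hle : ‖x‖ ≤ ‖x - P x‖ := by
    have := h (-t)
    rwa [neg_smul, ← sub_eq_add_neg, ht] at this
  have hpyth : ‖x‖ ^ 2 = ‖P x‖ ^ 2 + ‖x - P x‖ ^ 2 := by
    have := norm_add_sq_eq_norm_sq_add_norm_sq_of_inner_eq_zero (P x) (x - P x)
      (Submodule.inner_right_of_mem_orthogonal ((𝕜 ∙ y).starProjection_apply_mem x)
        ((𝕜 ∙ y).sub_starProjection_mem_orthogonal x))
    rwa [add_sub_cancel, ← sq, ← sq, ← sq] at this
  have hP : P x = 0 := by
    have : ‖P x‖ ^ 2 = 0 := by nlinarith [pow_le_pow_left₀ (norm_nonneg _) hle 2, sq_nonneg ‖P x‖]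
    simpa using this
  rwa [Submodule.starProjection_apply_eq_zero_iff,
    Submodule.mem_orthogonal_singleton_iff_inner_left] at hP

variable [CompleteSpace E]

lemma IsIdempotentElem.isSelfAdjoint_of_norm_le_one {p : E →L[𝕜] E} (hp : IsIdempotentElem p)
    (hn : ‖p‖ ≤ 1) : IsSelfAdjoint p := by
  rw [isSelfAdjoint_iff_isSymmetric,
    LinearMap.IsIdempotentElem.isSymmetric_iff_isOrtho_range_ker hp.toLinearMap,
    Submodule.isOrtho_iff_inner_eq]
  rintro _ ⟨x, rfl⟩ y (hy : p y = 0)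
  refine inner_eq_zero_of_forall_norm_le_norm_add_smul fun t => ?_
  calc ‖p x‖ = ‖p (p x + t • y)‖ := by
        rw [map_add, map_smul, hy, smul_zero, add_zero, ← comp_apply p p x, ← mul_def, hp.eq]
    _ ≤ ‖p‖ * ‖p x + t • y‖ := p.le_opNorm _
    _ ≤ ‖p x + t • y‖ := mul_le_of_le_one_left (norm_nonneg _) hn

end Contraction

lemma PiLp.norm_eq_norm_default {p : ENNReal} [Fact (1 ≤ p)] {ι : Type*} [Fintype ι] [Unique ι]
    {β : ι → Type*} [∀ i, NormedAddCommGroup (β i)] (x : PiLp p β) : ‖x‖ = ‖x default‖ := by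
  have hx : x = PiLp.single p default (x default) := by
    ext i
    rw [Unique.eq_default i, PiLp.single_eq_same]
  rw [hx, PiLp.norm_single, PiLp.single_eq_same]

section MatOp

variable {H₁ H₂ : Type*} [NormedAddCommGroup H₁] [InnerProductSpace ℂ H₁]
  [NormedAddCommGroup H₂] [InnerProductSpace ℂ H₂]

lemma matOp_of_const_apply (a : H₁ →L[ℂ] H₂) (v : PiLp 2 fun _ : Fin 1 => H₁) :
    matOp (Matrix.of fun _ _ : Fin 1 => a) v 0 = a (v 0) := by
  simp [matOp]

lemma norm_matOp_of_const (a : H₁ →L[ℂ] H₂) : ‖matOp (Matrix.of fun _ _ : Fin 1 => a)‖ = ‖a‖ := by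
  apply le_antisymm
  · refine opNorm_le_bound _ (norm_nonneg a) fun v => ?_
    calc ‖matOp (Matrix.of fun _ _ => a) v‖ = ‖a (v 0)‖ := by
          rw [PiLp.norm_eq_norm_default, Fin.default_eq_zero, matOp_of_const_apply]
      _ ≤ ‖a‖ * ‖v 0‖ := a.le_opNorm _
      _ = ‖a‖ * ‖v‖ := by rw [PiLp.norm_eq_norm_default v, Fin.default_eq_zero]
  · refine opNorm_le_bound _ (norm_nonneg (matOp (Matrix.of fun _ _ => a))) fun u => ?_
    let w : PiLp 2 fun _ : Fin 1 => H₁ := PiLp.single 2 0 u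
    calc ‖a u‖ = ‖matOp (Matrix.of fun _ _ => a) w‖ := by
          rw [PiLp.norm_eq_norm_default, Fin.default_eq_zero, matOp_of_const_apply,
            PiLp.single_eq_same]
      _ ≤ ‖matOp (Matrix.of fun _ _ => a)‖ * ‖w‖ := le_opNorm _ _
      _ = ‖matOp (Matrix.of fun _ _ => a)‖ * ‖u‖ := by rw [PiLp.norm_single]

variable {K₁ K₂ : Type*} [NormedAddCommGroup K₁] [InnerProductSpace ℂ K₁]
  [NormedAddCommGroup K₂] [InnerProductSpace ℂ K₂]

lemma CompletelyIsometricOn.norm_map {f : (H₁ →L[ℂ] H₂) →ₗ[ℂ] (K₁ →L[ℂ] K₂)}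
    {X : Set (H₁ →L[ℂ] H₂)} (hf : CompletelyIsometricOn f X) {x : H₁ →L[ℂ] H₂} (hx : x ∈ X) :
    ‖f x‖ = ‖x‖ := by
  simpa [norm_matOp_of_const] using hf 1 (Matrix.of fun _ _ => x) fun _ _ => hx

end MatOp

section MatrixUnits

variable {n : Type*} [Fintype n] [DecidableEq n]

def matUnit (i j : n) : EuclideanSpace ℂ n →L[ℂ] EuclideanSpace ℂ n :=
  Matrix.toEuclideanCLM (𝕜 := ℂ) (Matrix.single i j 1)

lemma smul_matUnit (c : ℂ) (i j : n) :
    c • matUnit i j = Matrix.toEuclideanCLM (𝕜 := ℂ) (Matrix.single i j c) := by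
  rw [matUnit, ← map_smul, Matrix.smul_single, smul_eq_mul, mul_one]

lemma matUnit_comp_matUnit (i j k : n) : (matUnit i j).comp (matUnit j k) = matUnit i k := by
  rw [← mul_def, matUnit, matUnit, ← map_mul, Matrix.single_mul_single_same, mul_one]
  rfl

lemma matUnit_comp_matUnit_of_ne (i : n) {j k : n} (l : n) (h : j ≠ k) :
    (matUnit i j).comp (matUnit k l) = 0 := by
  rw [← mul_def, matUnit, matUnit, ← map_mul]
  simp [h]

lemma adjoint_matUnit (i j : n) : adjoint (matUnit i j) = matUnit j i := by
  rw [← star_eq_adjoint, matUnit, ← map_star, Matrix.star_eq_conjTranspose,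
    Matrix.conjTranspose_single, star_one]
  rfl

lemma norm_matUnit_self_le_one (i : n) : ‖matUnit i i‖ ≤ 1 :=
  IsStarProjection.norm_le _
    ⟨matUnit_comp_matUnit i i i, (star_eq_adjoint (matUnit i i)).trans (adjoint_matUnit i i)⟩

lemma matUnit_ne_zero (i j : n) : matUnit i j ≠ 0 := fun h => by
  simpa using congrFun₂ (Matrix.toEuclideanCLM.injective (h.trans (map_zero _).symm)) i j

lemma scalarLine_matUnit_inter_eq {i k : n} (j l : n) (hik : i ≠ k) :
    scalarLine (matUnit i j) ∩ scalarLine (matUnit k l) = {0} := by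
  ext x
  constructor
  · rintro ⟨⟨c, rfl⟩, d, h⟩
    rw [smul_matUnit, smul_matUnit] at h
    have hc := congrFun₂ (Matrix.toEuclideanCLM.injective h) i j
    rw [Matrix.single_apply_same, Matrix.single_apply_of_row_ne hik.symm] at hc
    simp [hc]
  · rintro rfl
    exact ⟨zero_mem_scalarLine _, zero_mem_scalarLine _⟩

end MatrixUnits

theorem not_stronglyDeltaEquivAlg_scalarLine {K L : Type u}
    [NormedAddCommGroup K] [InnerProductSpace ℂ K] [CompleteSpace K]
    [NormedAddCommGroup L] [InnerProductSpace ℂ L] [CompleteSpace L]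
    {a : K →L[ℂ] K} {e : L →L[ℂ] L} (ha : a ≠ 0) (haa : a.comp a = 0)
    (he : IsIdempotentElem e) (he_norm : ‖e‖ ≤ 1) :
    ¬ StronglyDeltaEquivAlg (scalarLine a) (scalarLine e) := by
  rintro ⟨G₁, G₂, φ, ψ, M, hφ, hψ, hφmul, hψmul, -, hX, -⟩
  have hφa : φ a ≠ 0 := by
    rw [← norm_ne_zero_iff, hφ.norm_map (self_mem_scalarLine a)]
    exact norm_ne_zero_iff.mpr ha
  have hφaa : (φ a).comp (φ a) = 0 := by
    rw [← hφmul a (self_mem_scalarLine a) a (self_mem_scalarLine a), haa, map_zero]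
  have hψe : IsSelfAdjoint (ψ e) := by
    refine IsIdempotentElem.isSelfAdjoint_of_norm_le_one ?_ ?_
    · show (ψ e).comp (ψ e) = ψ e
      rw [← hψmul e (self_mem_scalarLine e) e (self_mem_scalarLine e)]
      exact congr_arg ψ he
    · rwa [hψ.norm_map (self_mem_scalarLine e)]
  have hφX : adjSet (φ '' scalarLine a) ⊆ φ '' scalarLine a := by
    have hψY : adjSet (ψ '' scalarLine e) ⊆ ψ '' scalarLine e := by
      rw [image_scalarLine, adjSet_scalarLine, hψe.adjoint_eq]
    rw [hX]
    exact adjSet_clSpan_subset (adjSet_setMul_subset hψY)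
  rw [image_scalarLine] at hφX
  exact hφa (eq_zero_of_comp_self_eq_zero_of_adjoint_mem_scalarLine hφaa
    (hφX ⟨φ a, self_mem_scalarLine _, rfl⟩))

lemma egX_eq : egX = scalarLine (matUnit (0 : Fin 2) 1) := rfl

lemma egY_eq : egY = scalarLine (matUnit (1 : Fin 2) 1) := rfl

lemma egM1_eq : egM1 = scalarLine 1 := rfl

lemma egM2_eq : egM2 = scalarLine (matUnit (0 : Fin 2) 1) := rfl

/-- The operator algebras `X = ℂ E₁₂` and `Y = ℂ E₂₂` in `M₂(ℂ)` are
strongly TRO equivalent as operator spaces via `M₁ = ℂ I₂` and `M₂ = ℂ E₁₂`, but they are not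
strongly Δ-equivalent as operator algebras; their diagonals are `X ∩ X* = 0` and
`Y ∩ Y* = Y`. -/
theorem strongTROEquiv_not_deltaEquiv_as_algebras :
    (∀ x ∈ egX, ∀ x' ∈ egX, x.comp x' ∈ egX) ∧
    (∀ y ∈ egY, ∀ y' ∈ egY, y.comp y' ∈ egY) ∧
    IsTRO egM1 ∧ IsTRO egM2 ∧
    egX = clSpan (setMul (setMul egM2 egY) (adjSet egM1)) ∧
    egY = clSpan (setMul (setMul (adjSet egM2) egX) egM1) ∧
    egX ∩ adjSet egX = {0} ∧
    egY ∩ adjSet egY = egY ∧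
    ¬ StronglyDeltaEquivAlg egX egY := by
  have hE12_sq : (matUnit (0 : Fin 2) 1).comp (matUnit 0 1) = 0 :=
    matUnit_comp_matUnit_of_ne _ _ (by decide)
  rw [egX_eq, egY_eq, egM1_eq, egM2_eq]
  refine ⟨comp_mem_scalarLine_of_comp_self_mem ?_, comp_mem_scalarLine_of_comp_self_mem ?_,
    isTRO_scalarLine ?_, isTRO_scalarLine ?_, ?_, ?_, ?_, ?_,
    not_stronglyDeltaEquivAlg_scalarLine (matUnit_ne_zero 0 1) hE12_sq
      (matUnit_comp_matUnit 1 1 1) (norm_matUnit_self_le_one 1)⟩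
  · rw [hE12_sq]
    exact zero_mem_scalarLine _
  · rw [matUnit_comp_matUnit]
    exact self_mem_scalarLine _
  · rw [adjoint_one, one_def, comp_id, comp_id]
    exact self_mem_scalarLine _
  · rw [adjoint_matUnit, matUnit_comp_matUnit, matUnit_comp_matUnit]
    exact self_mem_scalarLine _
  · rw [setMul_scalarLine, adjSet_scalarLine, setMul_scalarLine, clSpan_scalarLine,
      matUnit_comp_matUnit, adjoint_one, one_def, comp_id]
  · rw [adjSet_scalarLine, setMul_scalarLine, setMul_scalarLine, clSpan_scalarLine,
      adjoint_matUnit, matUnit_comp_matUnit, one_def, comp_id]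
  · rw [adjSet_scalarLine, adjoint_matUnit]
    exact scalarLine_matUnit_inter_eq _ _ (by decide)
  · rw [adjSet_scalarLine, adjoint_matUnit, Set.inter_self]

end
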